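/- In the ILT model, for all t > 0, vol(G_t) = 3^t · vol(G_0) + 2·n_0·(3^t − 2^t). Equivalently, the number of edges satisfies e_t = 3^t(e_0 + n_0) − 2^t n_0. -/

import Mathlib

open SimpleGraph Finset

universe u
variable {V : Type u}

/-- One step of the Iterated Local Transitivity model: every vertex `x` gets a
clone `Sum.inr x` joined to `x` and all of its neighbours; old vertices are `Sum.inl`. -/
def ILTstep (G : SimpleGraph V) : SimpleGraph (V ⊕ V) where
  Adj a b := match a, b with
    | Sum.inl x, Sum.inl y => G.Adj x y
    | Sum.inl x, Sum.inr y => x = y ∨ G.Adj x y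
    | Sum.inr x, Sum.inl y => x = y ∨ G.Adj x y
    | Sum.inr _, Sum.inr _ => False
  symm := by
    constructor
    rintro (x | x) (y | y) h
    · exact G.adj_symm h
    · exact h.imp Eq.symm (fun hh => G.adj_symm hh)
    · exact h.imp Eq.symm (fun hh => G.adj_symm hh)
    · exact h.elim
  loopless := by
    constructor
    rintro (x | x) h
    · exact G.loopless.irrefl x h
    · exact h

instance ILTstepDecAdj (G : SimpleGraph V) [DecidableEq V] [DecidableRel G.Adj] :
    DecidableRel (ILTstep G).Adj := fun a b =>
  match a, b with
  | Sum.inl x, Sum.inl y => inferInstanceAs (Decidable (G.Adj x y))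
  | Sum.inl x, Sum.inr y => inferInstanceAs (Decidable (x = y ∨ G.Adj x y))
  | Sum.inr x, Sum.inl y => inferInstanceAs (Decidable (x = y ∨ G.Adj x y))
  | Sum.inr _, Sum.inr _ => inferInstanceAs (Decidable False)

/-- The vertex set of the ILT model at time `t`. -/
def ILTV (V : Type u) : ℕ → Type u
  | 0 => V
  | t + 1 => ILTV V t ⊕ ILTV V t

/-- The graph of the ILT model at time `t`, starting from `G`. -/
def ILTG (G : SimpleGraph V) : (t : ℕ) → SimpleGraph (ILTV V t)
  | 0 => G
  | t + 1 => ILTstep (ILTG G t)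

instance ILTVFintype [Fintype V] : ∀ t, Fintype (ILTV V t)
  | 0 => inferInstanceAs (Fintype V)
  | t + 1 => letI := ILTVFintype t
             inferInstanceAs (Fintype (ILTV V t ⊕ ILTV V t))

instance ILTVDecEq [DecidableEq V] : ∀ t, DecidableEq (ILTV V t)
  | 0 => inferInstanceAs (DecidableEq V)
  | t + 1 => letI := ILTVDecEq t
             inferInstanceAs (DecidableEq (ILTV V t ⊕ ILTV V t))

instance ILTGDecAdj (G : SimpleGraph V) [DecidableEq V] [DecidableRel G.Adj] :
    ∀ t, DecidableRel (ILTG G t).Adj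
  | 0 => inferInstanceAs (DecidableRel G.Adj)
  | t + 1 => letI : DecidableEq (ILTV V t) := ILTVDecEq t
             letI : DecidableRel (ILTG G t).Adj := ILTGDecAdj G t
             ILTstepDecAdj (ILTG G t)

/-- The volume of a graph: the sum of the degrees of its vertices. -/
def graphVol [Fintype V] (G : SimpleGraph V) [DecidableRel G.Adj] : ℕ :=
  ∑ v, G.degree v

/-- The Wiener index: the sum of distances over unordered pairs of vertices. -/
noncomputable def wienerIndex [Fintype V] (G : SimpleGraph V) : ℕ :=
  (∑ x : V, ∑ y : V, G.dist x y) / 2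

/-! The invariant is `vol(G_t) + 2 n_t`: each step triples it, since the degrees of `G_{t+1}` are
`2 deg x + 1` at the old vertex `x` and `deg x + 1` at its clone, while `n_{t+1} = 2 n_t`.
The formulas follow with `n_t = 2^t n_0` and `vol = 2 e`. -/

lemma degree_eq_card_inl_add_card_inr {α β : Type*} [Fintype α] [Fintype β]
    (H : SimpleGraph (α ⊕ β)) [DecidableRel H.Adj] (v : α ⊕ β) :
    H.degree v = #{a | H.Adj v (.inl a)} + #{b | H.Adj v (.inr b)} := by
  rw [← card_neighborFinset_eq_degree, neighborFinset_eq_filter, card_filter,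
    Fintype.sum_sum_type, card_filter, card_filter]

lemma card_filter_eq_or_adj [Fintype V] [DecidableEq V] (G : SimpleGraph V) [DecidableRel G.Adj]
    (x : V) : #{y | x = y ∨ G.Adj x y} = G.degree x + 1 := by
  have : ({y | x = y ∨ G.Adj x y} : Finset V) = insert x (G.neighborFinset x) := by
    ext y; simp [eq_comm]
  rw [this, card_insert_of_notMem (by simp), card_neighborFinset_eq_degree]

section ILTstep

variable (G : SimpleGraph V)

@[simp] lemma ILTstep_adj_inl_inl (x y : V) : (ILTstep G).Adj (.inl x) (.inl y) ↔ G.Adj x y :=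
  Iff.rfl

@[simp] lemma ILTstep_adj_inl_inr (x y : V) :
    (ILTstep G).Adj (.inl x) (.inr y) ↔ x = y ∨ G.Adj x y :=
  Iff.rfl

@[simp] lemma ILTstep_adj_inr_inl (x y : V) :
    (ILTstep G).Adj (.inr x) (.inl y) ↔ x = y ∨ G.Adj x y :=
  Iff.rfl

@[simp] lemma ILTstep_not_adj_inr_inr (x y : V) : ¬(ILTstep G).Adj (.inr x) (.inr y) :=
  id

variable [Fintype V] [DecidableEq V] [DecidableRel G.Adj]

lemma ILTstep_degree_inl (x : V) : (ILTstep G).degree (.inl x) = 2 * G.degree x + 1 := by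
  simp only [degree_eq_card_inl_add_card_inr, ILTstep_adj_inl_inl, ILTstep_adj_inl_inr,
    card_filter_eq_or_adj, ← neighborFinset_eq_filter, card_neighborFinset_eq_degree]
  ring

lemma ILTstep_degree_inr (x : V) : (ILTstep G).degree (.inr x) = G.degree x + 1 := by
  simp only [degree_eq_card_inl_add_card_inr, ILTstep_adj_inr_inl, ILTstep_not_adj_inr_inr,
    card_filter_eq_or_adj, filter_false, card_empty, add_zero]

lemma graphVol_ILTstep : graphVol (ILTstep G) = 3 * graphVol G + 2 * Fintype.card V := by
  simp only [graphVol, Fintype.sum_sum_type, ILTstep_degree_inl, ILTstep_degree_inr,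
    sum_add_distrib, ← mul_sum, sum_const, card_univ, smul_eq_mul]
  ring

end ILTstep

lemma card_ILTV (V : Type u) [Fintype V] (t : ℕ) :
    Fintype.card (ILTV V t) = 2 ^ t * Fintype.card V := by
  induction t with
  | zero => simp; rfl
  | succ t ih =>
    rw [pow_succ, mul_right_comm, ← ih, mul_two]
    exact Fintype.card_sum

lemma graphVol_ILTG_add_two_mul_card [Fintype V] [DecidableEq V] (G : SimpleGraph V)
    [DecidableRel G.Adj] (t : ℕ) :
    graphVol (ILTG G t) + 2 * Fintype.card (ILTV V t)
      = 3 ^ t * (graphVol G + 2 * Fintype.card V) := by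
  induction t with
  | zero => simp; rfl
  | succ t ih =>
    have step : graphVol (ILTG G (t + 1))
        = 3 * graphVol (ILTG G t) + 2 * Fintype.card (ILTV V t) :=
      graphVol_ILTstep (ILTG G t)
    have card : Fintype.card (ILTV V (t + 1)) = 2 * Fintype.card (ILTV V t) := by
      rw [card_ILTV, card_ILTV, pow_succ]; ring
    rw [step, card, pow_succ, mul_comm _ 3, mul_assoc, ← ih]
    ring

theorem ILT_volume_formula_general [Fintype V] [DecidableEq V]
    (G : SimpleGraph V) [DecidableRel G.Adj] (t : ℕ) :
    graphVol (ILTG G t) = 3 ^ t * graphVol G + 2 * Fintype.card V * (3 ^ t - 2 ^ t) ∧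
    (ILTG G t).edgeFinset.card
      = 3 ^ t * (G.edgeFinset.card + Fintype.card V) - 2 ^ t * Fintype.card V := by
  have hvol := graphVol_ILTG_add_two_mul_card G t
  rw [card_ILTV] at hvol
  have hedges : graphVol (ILTG G t) = 2 * #(ILTG G t).edgeFinset :=
    sum_degrees_eq_twice_card_edges _
  have hedges₀ : graphVol G = 2 * #G.edgeFinset := sum_degrees_eq_twice_card_edges _
  have hpow : 2 ^ t ≤ 3 ^ t := Nat.pow_le_pow_left (by norm_num) t
  have hle : 2 ^ t * Fintype.card V ≤ 3 ^ t * (#G.edgeFinset + Fintype.card V) :=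
    Nat.mul_le_mul hpow (Nat.le_add_left _ _)
  constructor
  · zify [hpow] at hvol ⊢
    linear_combination hvol
  · qify [hle] at hvol hedges hedges₀ ⊢
    linear_combination (hvol - hedges + 3 ^ t * hedges₀) / 2

theorem ILT_volume_formula [Fintype V] [DecidableEq V]
    (G : SimpleGraph V) [DecidableRel G.Adj] (t : ℕ) (ht : 0 < t) :
    graphVol (ILTG G t) = 3 ^ t * graphVol G + 2 * Fintype.card V * (3 ^ t - 2 ^ t) ∧
    (ILTG G t).edgeFinset.card
      = 3 ^ t * (G.edgeFinset.card + Fintype.card V) - 2 ^ t * Fintype.card V :=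
  ILT_volume_formula_general G t
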